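/- arXiv:1201.4217 — 2 statements merged into one kernel-verified Lean document; each statement's English description precedes it below -/
import Mathlib

section
/- Let g : (0,∞) → ℝ be integrable. Then ∫₀^∞ | ∫₀^{x/2} t g(t)/(x² − t²) dt | dx ≤ (2/3) ∫₀^∞ |g(t)| dt. -/
/-!
Moving the absolute value inside and swapping the integrals (Tonelli) bounds the left side by
`∫ |g t| (∫ K(x, t) dx) dt` with `K(x, t) = t / (x² - t²)` on `0 < t ≤ x / 2`. For `x ≥ 2t` one has
`x² - t² ≥ 3x² / 4`, so `∫_{2t}^∞ K(x, t) dx ≤ (4t / 3) ∫_{2t}^∞ x⁻² dx = 2 / 3`.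
-/

open MeasureTheory Real Set

theorem integral_norm_integral_smul_le {X Y E : Type*} [MeasurableSpace X] [MeasurableSpace Y]
    [NormedAddCommGroup E] [NormedSpace ℝ E] {μ : Measure X} {ν : Measure Y} [SFinite μ]
    [SFinite ν] {K : X → Y → ℝ} (hK : Measurable (Function.uncurry K)) {C : ℝ} (hC : 0 ≤ C)
    (hKC : ∀ y, ∫⁻ x, ‖K x y‖ₑ ∂μ ≤ ENNReal.ofReal C) {f : Y → E} (hf : Integrable f ν) :
    ∫ x, ‖∫ y, K x y • f y ∂ν‖ ∂μ ≤ C * ∫ y, ‖f y‖ ∂ν := by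
  have hKf : AEStronglyMeasurable (fun p : X × Y ↦ K p.1 p.2 • f p.2) (μ.prod ν) :=
    hK.aestronglyMeasurable.smul (hf.1.comp_snd)
  have hlin : ∫⁻ x, ‖∫ y, K x y • f y ∂ν‖ₑ ∂μ ≤ ENNReal.ofReal C * ∫⁻ y, ‖f y‖ₑ ∂ν :=
    calc ∫⁻ x, ‖∫ y, K x y • f y ∂ν‖ₑ ∂μ
        ≤ ∫⁻ x, ∫⁻ y, ‖K x y • f y‖ₑ ∂ν ∂μ :=
          lintegral_mono fun x ↦ enorm_integral_le_lintegral_enorm _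
      _ = ∫⁻ y, (∫⁻ x, ‖K x y‖ₑ ∂μ) * ‖f y‖ₑ ∂ν := by
          rw [lintegral_lintegral_swap hKf.enorm]
          simp only [enorm_smul]
          exact lintegral_congr fun y ↦ lintegral_mul_const _ hK.of_uncurry_right.enorm
      _ ≤ ∫⁻ y, ENNReal.ofReal C * ‖f y‖ₑ ∂ν := lintegral_mono fun y ↦ by gcongr; exact hKC y
      _ = ENNReal.ofReal C * ∫⁻ y, ‖f y‖ₑ ∂ν := lintegral_const_mul' _ _ ENNReal.ofReal_ne_top
  rw [integral_norm_eq_lintegral_enorm hKf.integral_prod_right',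
    integral_norm_eq_lintegral_enorm hf.1, ← ENNReal.toReal_ofReal hC, ← ENNReal.toReal_mul]
  exact ENNReal.toReal_mono (ENNReal.mul_ne_top ENNReal.ofReal_ne_top hf.2.ne) hlin

lemma lintegral_Ici_ofReal_inv_sq {a : ℝ} (ha : 0 < a) :
    ∫⁻ x in Ici a, ENNReal.ofReal (x ^ 2)⁻¹ = ENNReal.ofReal a⁻¹ := by
  have hpow : EqOn (fun x : ℝ ↦ x ^ (-2 : ℝ)) (fun x ↦ (x ^ 2)⁻¹) (Ioi a) := fun x hx ↦ by
    simp only [rpow_neg (ha.trans hx).le, rpow_two]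
  have hint : IntegrableOn (fun x : ℝ ↦ (x ^ 2)⁻¹) (Ioi a) :=
    (integrableOn_Ioi_rpow_of_lt (by norm_num) ha).congr_fun hpow measurableSet_Ioi
  rw [Measure.restrict_congr_set Ioi_ae_eq_Ici.symm,
    ← ofReal_integral_eq_lintegral_ofReal hint (.of_forall fun x ↦ by positivity),
    ← setIntegral_congr_fun measurableSet_Ioi hpow, integral_Ioi_rpow_of_lt (by norm_num) ha]
  norm_num [rpow_neg_one]

noncomputable def nearZeroKernel (x t : ℝ) : ℝ :=
  (Ioc 0 (x / 2)).indicator (fun t ↦ t / (x ^ 2 - t ^ 2)) t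

lemma measurable_nearZeroKernel : Measurable (Function.uncurry nearZeroKernel) := by
  unfold nearZeroKernel Function.uncurry
  simp only [indicator_apply, mem_Ioc]
  refine Measurable.ite ?_ (by fun_prop) measurable_const
  exact (measurableSet_lt measurable_const measurable_snd).inter
    (measurableSet_le measurable_snd (measurable_fst.div_const 2))

lemma div_sq_sub_sq_le_of_two_mul_le {x t : ℝ} (ht : 0 < t) (hx : 2 * t ≤ x) :
    t / (x ^ 2 - t ^ 2) ≤ 4 / 3 * t * (x ^ 2)⁻¹ := by
  have hx0 : 0 < x := by linarith
  rw [div_le_iff₀ (by nlinarith)]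
  field_simp
  nlinarith

lemma enorm_nearZeroKernel_le (x : ℝ) {t : ℝ} (ht : 0 < t) :
    ‖nearZeroKernel x t‖ₑ ≤ ENNReal.ofReal (4 / 3 * t) *
      (Ici (2 * t)).indicator (fun x ↦ ENNReal.ofReal (x ^ 2)⁻¹) x := by
  by_cases hx : 2 * t ≤ x
  · have hden : 0 < x ^ 2 - t ^ 2 := by nlinarith
    rw [nearZeroKernel, indicator_of_mem (show t ∈ Ioc 0 (x / 2) from ⟨ht, by linarith⟩),
      indicator_of_mem (show x ∈ Ici (2 * t) from hx), ← ENNReal.ofReal_mul (by positivity),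
      Real.enorm_of_nonneg (by positivity)]
    exact ENNReal.ofReal_le_ofReal <| by
      simpa [mul_assoc] using div_sq_sub_sq_le_of_two_mul_le ht hx
  · rw [nearZeroKernel, indicator_of_notMem (fun h ↦ hx (by linarith [h.2]))]
    simp

lemma lintegral_enorm_nearZeroKernel_le (t : ℝ) :
    ∫⁻ x, ‖nearZeroKernel x t‖ₑ ≤ ENNReal.ofReal (2 / 3) := by
  rcases le_or_gt t 0 with ht | ht
  · simp [nearZeroKernel, indicator_of_notMem (fun h : t ∈ Ioc _ _ ↦ ht.not_gt h.1)]
  calc ∫⁻ x, ‖nearZeroKernel x t‖ₑ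
      ≤ ∫⁻ x, ENNReal.ofReal (4 / 3 * t) *
          (Ici (2 * t)).indicator (fun x ↦ ENNReal.ofReal (x ^ 2)⁻¹) x :=
        lintegral_mono fun x ↦ enorm_nearZeroKernel_le x ht
    _ = ENNReal.ofReal (4 / 3 * t) * ENNReal.ofReal (2 * t)⁻¹ := by
        rw [lintegral_const_mul' _ _ ENNReal.ofReal_ne_top, lintegral_indicator measurableSet_Ici,
          lintegral_Ici_ofReal_inv_sq (by positivity)]
    _ = ENNReal.ofReal (2 / 3) := by
        rw [← ENNReal.ofReal_mul (by positivity)]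
        congr 1
        field_simp
        norm_num

lemma nearZeroKernel_smul (g : ℝ → ℝ) (x t : ℝ) :
    nearZeroKernel x t • g t = (Ioc 0 (x / 2)).indicator (fun t ↦ t * g t / (x ^ 2 - t ^ 2)) t := by
  by_cases ht : t ∈ Ioc 0 (x / 2)
  · simp only [nearZeroKernel, indicator_of_mem ht, smul_eq_mul]
    ring
  · simp [nearZeroKernel, indicator_of_notMem ht]

/-- For integrable `g` on `(0,∞)`,
`∫₀^∞ |∫₀^{x/2} t g(t)/(x² − t²) dt| dx ≤ (2/3) ∫₀^∞ |g(t)| dt`. -/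
theorem near_zero_part_odd_hilbert_bound
    (g : ℝ → ℝ) (hg : IntegrableOn g (Ioi (0 : ℝ))) :
    ∫ x in Ioi (0 : ℝ), |∫ t in Ioc (0 : ℝ) (x / 2), t * g t / (x ^ 2 - t ^ 2)|
      ≤ 2 / 3 * ∫ t in Ioi (0 : ℝ), |g t| := by
  have hinner (x : ℝ) : ∫ t in Ioc 0 (x / 2), t * g t / (x ^ 2 - t ^ 2) =
      ∫ t in Ioi 0, nearZeroKernel x t • g t := by
    simp_rw [nearZeroKernel_smul, setIntegral_indicator measurableSet_Ioc,
      inter_eq_right.2 Ioc_subset_Ioi_self]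
  simp_rw [hinner, ← Real.norm_eq_abs]
  exact integral_norm_integral_smul_le measurable_nearZeroKernel (by norm_num)
    (fun t ↦ (setLIntegral_le_lintegral _ _).trans (lintegral_enorm_nearZeroKernel_le t)) hg
end

section
/- There exists a constant C > 0 such that for every integrable g : (0,∞) → ℝ with ∫_{1/2}^∞ |g(t)| log(3t) dt < ∞, one has ∫₁^∞ | ∫_{x/2}^{x − 1/2} t g(t)/(x² − t²) dt | dx ≤ C ∫_{1/2}^∞ |g(t)| log(3t) dt. -/
open MeasureTheory Real Set
open scoped ENNReal

/-! By Minkowski's integral inequality and Tonelli it suffices to bound, for each `t > 1/2`,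
the integral of the kernel over `x`. The region `x/2 ≤ t ≤ x - 1/2` is `t + 1/2 ≤ x ≤ 2t`,
where `t / (x² - t²) ≤ 1 / (x - t)`, whose integral is `log (2t) ≤ log (3t)`; so `C = 1`
works. -/

theorem lintegral_Icc_ofReal_inv_sub (t : ℝ) {a b : ℝ} (ha : 0 < a) (hab : a ≤ b) :
    ∫⁻ x in Icc (t + a) (t + b), ENNReal.ofReal (x - t)⁻¹ =
      ENNReal.ofReal (log (b / a)) := by
  have hpos : ∀ x ∈ Icc (t + a) (t + b), 0 < x - t := fun x hx => by linarith [hx.1]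
  have hcont : ContinuousOn (fun x => (x - t)⁻¹) (Icc (t + a) (t + b)) :=
    (continuousOn_id.sub continuousOn_const).inv₀ fun x hx => (hpos x hx).ne'
  rw [← ofReal_integral_eq_lintegral_ofReal (hcont.integrableOn_compact isCompact_Icc)
      (ae_restrict_of_forall_mem measurableSet_Icc fun x hx => (inv_pos.2 (hpos x hx)).le),
    integral_Icc_eq_integral_Ioc, ← intervalIntegral.integral_of_le (by linarith),
    intervalIntegral.integral_comp_sub_right (fun x => x⁻¹), add_sub_cancel_left,
    add_sub_cancel_left, integral_inv_of_pos ha (ha.trans_le hab)]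

noncomputable def leftMiddleKernel (x t : ℝ) : ℝ≥0∞ :=
  (Icc (x / 2) (x - 1 / 2)).indicator (fun t => ENNReal.ofReal (t / (x ^ 2 - t ^ 2))) t

theorem measurable_leftMiddleKernel :
    Measurable fun p : ℝ × ℝ => leftMiddleKernel p.1 p.2 := by
  unfold leftMiddleKernel
  simp only [indicator_apply, mem_Icc]
  refine Measurable.ite ?_ (by fun_prop) measurable_const
  exact (measurableSet_le (measurable_fst.div_const 2) measurable_snd).inter
    (measurableSet_le measurable_snd (measurable_fst.sub_const _))

-- `t + t` rather than `2 * t`, to match the shape of `lintegral_Icc_ofReal_inv_sub`.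
theorem leftMiddleKernel_eq_indicator (x t : ℝ) :
    leftMiddleKernel x t =
      (Icc (t + 1 / 2) (t + t)).indicator (fun x => ENNReal.ofReal (t / (x ^ 2 - t ^ 2))) x := by
  simp only [leftMiddleKernel, indicator_apply, mem_Icc]
  congr 1
  apply propext
  constructor <;> rintro ⟨h₁, h₂⟩ <;> constructor <;> linarith

theorem div_sq_sub_sq_le_inv_sub {x t : ℝ} (ht : 0 ≤ t) (htx : t < x) :
    t / (x ^ 2 - t ^ 2) ≤ (x - t)⁻¹ := by
  have hxt : 0 < x - t := by linarith
  rw [show x ^ 2 - t ^ 2 = (x - t) * (x + t) by ring]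
  calc t / ((x - t) * (x + t)) ≤ (x + t) / ((x - t) * (x + t)) :=
        div_le_div_of_nonneg_right (by linarith) (by nlinarith)
    _ = (x - t)⁻¹ := div_mul_cancel_right₀ (by linarith) _

theorem lintegral_leftMiddleKernel_le {t : ℝ} (ht : 1 / 2 ≤ t) :
    ∫⁻ x in Ioi 1, leftMiddleKernel x t ≤ ENNReal.ofReal (log (3 * t)) := by
  simp_rw [leftMiddleKernel_eq_indicator _ t]
  calc _ ≤ ∫⁻ x, (Icc (t + 1 / 2) (t + t)).indicator
          (fun x => ENNReal.ofReal (t / (x ^ 2 - t ^ 2))) x := setLIntegral_le_lintegral _ _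
    _ = ∫⁻ x in Icc (t + 1 / 2) (t + t), ENNReal.ofReal (t / (x ^ 2 - t ^ 2)) :=
        lintegral_indicator measurableSet_Icc _
    _ ≤ ∫⁻ x in Icc (t + 1 / 2) (t + t), ENNReal.ofReal (x - t)⁻¹ :=
        setLIntegral_mono' measurableSet_Icc fun x hx =>
          ENNReal.ofReal_le_ofReal (div_sq_sub_sq_le_inv_sub (by linarith) (by linarith [hx.1]))
    _ = ENNReal.ofReal (log (t / (1 / 2))) := lintegral_Icc_ofReal_inv_sub t (by norm_num) ht
    _ ≤ ENNReal.ofReal (log (3 * t)) :=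
        ENNReal.ofReal_le_ofReal (log_le_log (by positivity) (by linarith))

theorem enorm_setIntegral_Icc_le_lintegral_leftMiddleKernel (g : ℝ → ℝ) {x : ℝ}
    (hx : 1 < x) :
    ‖∫ t in Icc (x / 2) (x - 1 / 2), t * g t / (x ^ 2 - t ^ 2)‖ₑ ≤
      ∫⁻ t in Ioi (1 / 2), ‖g t‖ₑ * leftMiddleKernel x t := by
  have hsub : Icc (x / 2) (x - 1 / 2) ⊆ Ioi (1 / 2) := fun t ht => by
    simp only [mem_Ioi]; linarith [ht.1]
  rw [← inter_eq_right.2 hsub, ← setIntegral_indicator measurableSet_Icc]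
  refine (enorm_integral_le_lintegral_enorm _).trans_eq (lintegral_congr fun t => ?_)
  by_cases ht : t ∈ Icc (x / 2) (x - 1 / 2)
  · have ht₀ : 0 < t := by linarith [ht.1]
    have hd : 0 < x ^ 2 - t ^ 2 := by nlinarith [ht.2]
    rw [leftMiddleKernel, indicator_of_mem ht, indicator_of_mem ht, enorm_eq_ofReal_abs,
      enorm_eq_ofReal_abs, ← ENNReal.ofReal_mul (abs_nonneg _), abs_div, abs_mul,
      abs_of_pos ht₀, abs_of_pos hd, mul_comm t, mul_div_assoc]
  · rw [leftMiddleKernel, indicator_of_notMem ht, indicator_of_notMem ht, enorm_zero, mul_zero]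

theorem lintegral_enorm_leftMiddle_le {g : ℝ → ℝ}
    (hg : AEMeasurable g (volume.restrict (Ioi (1 / 2)))) :
    ∫⁻ x in Ioi 1, ‖∫ t in Icc (x / 2) (x - 1 / 2), t * g t / (x ^ 2 - t ^ 2)‖ₑ ≤
      ∫⁻ t in Ioi (1 / 2), ‖g t‖ₑ * ENNReal.ofReal (log (3 * t)) := by
  have hmeas : AEMeasurable (Function.uncurry fun x t => ‖g t‖ₑ * leftMiddleKernel x t)
      ((volume.restrict (Ioi 1)).prod (volume.restrict (Ioi (1 / 2)))) :=
    (hg.enorm.comp_quasiMeasurePreserving Measure.quasiMeasurePreserving_snd).mul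
      measurable_leftMiddleKernel.aemeasurable
  calc _ ≤ ∫⁻ x in Ioi 1, ∫⁻ t in Ioi (1 / 2), ‖g t‖ₑ * leftMiddleKernel x t :=
        setLIntegral_mono' measurableSet_Ioi fun x hx =>
          enorm_setIntegral_Icc_le_lintegral_leftMiddleKernel g hx
    _ = ∫⁻ t in Ioi (1 / 2), ∫⁻ x in Ioi 1, ‖g t‖ₑ * leftMiddleKernel x t :=
        lintegral_lintegral_swap hmeas
    _ = ∫⁻ t in Ioi (1 / 2), ‖g t‖ₑ * ∫⁻ x in Ioi 1, leftMiddleKernel x t := by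
        simp_rw [lintegral_const_mul' _ _ enorm_ne_top]
    _ ≤ _ := setLIntegral_mono' measurableSet_Ioi fun t ht =>
        mul_le_mul_right (lintegral_leftMiddleKernel_le (le_of_lt ht)) _

/-- There is a constant `C > 0` such that for every integrable `g` on `(0,∞)` with
`∫_{1/2}^∞ |g(t)| log(3t) dt < ∞`,
`∫₁^∞ |∫_{x/2}^{x−1/2} t g(t)/(x² − t²) dt| dx ≤ C ∫_{1/2}^∞ |g(t)| log(3t) dt`. -/
theorem left_middle_part_log_bound :
    ∃ C : ℝ, 0 < C ∧ ∀ g : ℝ → ℝ, IntegrableOn g (Ioi (0 : ℝ)) →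
      IntegrableOn (fun t => |g t| * Real.log (3 * t)) (Ioi (1 / 2 : ℝ)) →
      ∫ x in Ioi (1 : ℝ), |∫ t in Icc (x / 2) (x - 1 / 2), t * g t / (x ^ 2 - t ^ 2)|
        ≤ C * ∫ t in Ioi (1 / 2 : ℝ), |g t| * Real.log (3 * t) := by
  refine ⟨1, one_pos, fun g hg hglog => ?_⟩
  have hnonneg : 0 ≤ᵐ[volume.restrict (Ioi (1 / 2))] fun t => |g t| * log (3 * t) :=
    ae_restrict_of_forall_mem measurableSet_Ioi fun t (ht : 1 / 2 < t) =>
      mul_nonneg (abs_nonneg _) (log_nonneg (by linarith))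
  rw [one_mul, ← ENNReal.ofReal_le_ofReal_iff (integral_nonneg_of_ae hnonneg)]
  calc _ ≤ ∫⁻ x in Ioi 1,
          ‖∫ t in Icc (x / 2) (x - 1 / 2), t * g t / (x ^ 2 - t ^ 2)‖ₑ :=
        (Real.ofReal_le_enorm _).trans <| (enorm_integral_le_lintegral_enorm _).trans_eq <| by
          simp only [enorm_abs]
    _ ≤ ∫⁻ t in Ioi (1 / 2), ‖g t‖ₑ * ENNReal.ofReal (log (3 * t)) :=
        lintegral_enorm_leftMiddle_le (hg.mono_set (Ioi_subset_Ioi (by norm_num))).aemeasurable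
    _ = _ := by
        rw [ofReal_integral_eq_lintegral_ofReal hglog hnonneg]
        simp_rw [ENNReal.ofReal_mul (abs_nonneg _), enorm_eq_ofReal_abs]
end
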